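/- arXiv:2007.09781 — 7 statements merged into one kernel-verified Lean document; each statement's English description precedes it below -/
import Mathlib

section
/- If a preference relation ≿ on a convex subset X of a real topological vector space admits a finite multi-utility representation U where each u ∈ U is continuous and strictly quasiconcave, then ≿ satisfies midpoint continuity: for every x, y ∈ X with y ≻ x, there exist α ∈ [0,1) and open sets V, W ⊆ X such that (αx + (1−α)y, x) ∈ V × W and z' ≻ x' for all (z', x') ∈ V × W. -/
/-!
If `y ≻ x`, strict quasiconcavity places the midpoint `z` of `x` and `y` strictly above `x` in
every utility, since `u x ≤ u y`. These are finitely many strict inequalities between continuous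
functions, so they persist for `z'` near `z` and `x'` near `x`, and any strict improvement in all
utilities of a nonempty family is a strict preference.
-/

open Filter

theorem exists_isOpen_forall_lt_of_continuousWithinAt {α β : Type*} [TopologicalSpace α]
    [LinearOrder β] [TopologicalSpace β] [OrderTopology β] [DenselyOrdered β]
    {X : Set α} {U : Finset (α → β)} {a b : α}
    (ha : ∀ u ∈ U, ContinuousWithinAt u X a) (hb : ∀ u ∈ U, ContinuousWithinAt u X b)
    (hlt : ∀ u ∈ U, u a < u b) :
    ∃ V W : Set α, IsOpen V ∧ IsOpen W ∧ b ∈ V ∧ a ∈ W ∧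
      ∀ b' ∈ V ∩ X, ∀ a' ∈ W ∩ X, ∀ u ∈ U, u a' < u b' := by
  choose c hac hcb using fun u : U => exists_between (hlt u u.2)
  have hV : (⋂ u : U, (u : α → β) ⁻¹' Set.Ioi (c u)) ∈ nhdsWithin b X :=
    iInter_mem.2 fun u => hb u u.2 (Ioi_mem_nhds (hcb u))
  have hW : (⋂ u : U, (u : α → β) ⁻¹' Set.Iio (c u)) ∈ nhdsWithin a X :=
    iInter_mem.2 fun u => ha u u.2 (Iio_mem_nhds (hac u))
  obtain ⟨V, hVopen, hbV, hVsub⟩ := mem_nhdsWithin.1 hV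
  obtain ⟨W, hWopen, haW, hWsub⟩ := mem_nhdsWithin.1 hW
  refine ⟨V, W, hVopen, hWopen, hbV, haW, fun b' hb' a' ha' u hu => ?_⟩
  have hcb' : c ⟨u, hu⟩ < u b' := Set.mem_iInter.1 (hVsub hb') ⟨u, hu⟩
  have hac' : u a' < c ⟨u, hu⟩ := Set.mem_iInter.1 (hWsub ha') ⟨u, hu⟩
  exact hac'.trans hcb'

section MultiUtility

variable {α : Type*} {X : Set α} {R : α → α → Prop} {U : Finset (α → ℝ)}
  (hrep : ∀ x ∈ X, ∀ y ∈ X, (R x y ↔ ∀ u ∈ U, u y ≤ u x))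
include hrep

theorem nonempty_of_not_rel_of_multiUtility {a b : α} (ha : a ∈ X) (hb : b ∈ X)
    (hab : ¬ R a b) : U.Nonempty := by
  by_contra hU
  rw [Finset.not_nonempty_iff_eq_empty] at hU
  exact hab ((hrep a ha b hb).2 (by simp [hU]))

theorem rel_and_not_rel_of_multiUtility_lt (hU : U.Nonempty) {a b : α} (ha : a ∈ X)
    (hb : b ∈ X) (hlt : ∀ u ∈ U, u b < u a) : R a b ∧ ¬ R b a := by
  obtain ⟨u, hu⟩ := hU
  refine ⟨(hrep a ha b hb).2 fun v hv => (hlt v hv).le, fun hba => ?_⟩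
  exact (hlt u hu).not_ge ((hrep b hb a ha).1 hba u hu)

end MultiUtility

theorem stmt_0_general {E : Type*} [AddCommGroup E] [Module ℝ E] [TopologicalSpace E]
    (X : Set E) (hX : Convex ℝ X)
    (R : E → E → Prop)
    (U : Finset (E → ℝ))
    (hrep : ∀ x ∈ X, ∀ y ∈ X, (R x y ↔ ∀ u ∈ U, u y ≤ u x))
    (hcont : ∀ u ∈ U, ContinuousOn u X)
    (hsqc : ∀ u ∈ U, ∀ x ∈ X, ∀ y ∈ X, x ≠ y → ∀ α : ℝ, 0 < α → α < 1 →
      min (u x) (u y) < u (α • x + (1 - α) • y)) :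
    ∀ x ∈ X, ∀ y ∈ X, (R y x ∧ ¬ R x y) →
      ∃ α : ℝ, 0 ≤ α ∧ α < 1 ∧ ∃ V W : Set E, IsOpen V ∧ IsOpen W ∧
        (α • x + (1 - α) • y) ∈ V ∩ X ∧ x ∈ W ∩ X ∧
        ∀ z' ∈ V ∩ X, ∀ x' ∈ W ∩ X, (R z' x' ∧ ¬ R x' z') := by
  intro x hx y hy ⟨hyx, hxy⟩
  set z : E := (1 / 2 : ℝ) • x + (1 - 1 / 2 : ℝ) • y
  have hz : z ∈ X := hX hx hy (by norm_num) (by norm_num) (by norm_num)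
  have hxz : ∀ u ∈ U, u x < u z := fun u hu => by
    have hne : x ≠ y := by rintro rfl; exact hxy hyx
    rw [← min_eq_left ((hrep y hy x hx).1 hyx u hu)]
    exact hsqc u hu x hx y hy hne (1 / 2) (by norm_num) (by norm_num)
  obtain ⟨V, W, hV, hW, hzV, hxW, hVW⟩ := exists_isOpen_forall_lt_of_continuousWithinAt
    (fun u hu => hcont u hu x hx) (fun u hu => hcont u hu z hz) hxz
  refine ⟨1 / 2, by norm_num, by norm_num, V, W, hV, hW, ⟨hzV, hz⟩, ⟨hxW, hx⟩,
    fun z' hz' x' hx' => ?_⟩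
  exact rel_and_not_rel_of_multiUtility_lt hrep
    (nonempty_of_not_rel_of_multiUtility hrep hx hy hxy) hz'.2 hx'.2 (hVW z' hz' x' hx')

/-- A preference on a convex subset X of a real topological vector space
admitting a finite multi-utility representation by continuous strictly quasiconcave
utilities satisfies midpoint continuity. -/
theorem stmt_0 {E : Type*} [AddCommGroup E] [Module ℝ E] [TopologicalSpace E]
    [IsTopologicalAddGroup E] [ContinuousSMul ℝ E]
    (X : Set E) (hX : Convex ℝ X)
    (R : E → E → Prop)
    (hrefl : ∀ x ∈ X, R x x)
    (htrans : ∀ x ∈ X, ∀ y ∈ X, ∀ z ∈ X, R x y → R y z → R x z)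
    (U : Finset (E → ℝ))
    (hrep : ∀ x ∈ X, ∀ y ∈ X, (R x y ↔ ∀ u ∈ U, u y ≤ u x))
    (hcont : ∀ u ∈ U, ContinuousOn u X)
    (hsqc : ∀ u ∈ U, ∀ x ∈ X, ∀ y ∈ X, x ≠ y → ∀ α : ℝ, 0 < α → α < 1 →
      min (u x) (u y) < u (α • x + (1 - α) • y)) :
    ∀ x ∈ X, ∀ y ∈ X, (R y x ∧ ¬ R x y) →
      ∃ α : ℝ, 0 ≤ α ∧ α < 1 ∧ ∃ V W : Set E, IsOpen V ∧ IsOpen W ∧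
        (α • x + (1 - α) • y) ∈ V ∩ X ∧ x ∈ W ∩ X ∧
        ∀ z' ∈ V ∩ X, ∀ x' ∈ W ∩ X, (R z' x' ∧ ¬ R x' z') :=
  stmt_0_general X hX R U hrep hcont hsqc
end

section
/- Let ≿ be a continuous preference on a convex metric-vector space X satisfying midpoint continuity. Suppose (K_n, x_n) is a sequence of nonempty compact convex subsets K_n ⊆ X and points x_n ∈ K_n, with K_n → K in the Hausdorff metric and x_n → x, and each x_n is ≿-maximal in K_n. Then x is ≿-maximal in K. -/
/-!
Since `Kₙ → K` in the Hausdorff metric, the limit `x` lies in `K`, and every `y ∈ K` is the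
limit of points `yₙ ∈ Kₙ`. If `y ≻ x`, midpoint continuity gives `α ∈ [0,1)` and neighbourhoods
`V ∋ αx + (1-α)y`, `W ∋ x` on which `V ≻ W`. For large `n` the convex combination
`αxₙ + (1-α)yₙ ∈ Kₙ` lies in `V` and `xₙ` lies in `W`, contradicting the maximality of `xₙ` in `Kₙ`.
-/

open Filter Topology Metric

section HausdorffLimit

variable {α : Type*} [PseudoMetricSpace α] {K : ℕ → Set α} {L : Set α}

theorem mem_of_tendsto_hausdorffDist (hL : IsClosed L) (hL₀ : L.Nonempty)
    (hfin : ∀ n, hausdorffEDist (K n) L ≠ ⊤)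
    (hK : Tendsto (fun n => hausdorffDist (K n) L) atTop (𝓝 0))
    {x : ℕ → α} {a : α} (hxK : ∀ n, x n ∈ K n) (hx : Tendsto x atTop (𝓝 a)) : a ∈ L := by
  have hdist : Tendsto (fun n => infDist (x n) L) atTop (𝓝 (infDist a L)) :=
    ((continuous_infDist_pt L).tendsto a).comp hx
  have hle : infDist a L ≤ 0 :=
    le_of_tendsto_of_tendsto hdist hK
      (Eventually.of_forall fun n => infDist_le_hausdorffDist_of_mem (hxK n) (hfin n))
  exact (hL.mem_iff_infDist_zero hL₀).2 (le_antisymm hle infDist_nonneg)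

theorem exists_tendsto_of_tendsto_hausdorffDist (hfin : ∀ n, hausdorffEDist (K n) L ≠ ⊤)
    (hK : Tendsto (fun n => hausdorffDist (K n) L) atTop (𝓝 0)) {b : α} (hb : b ∈ L) :
    ∃ y : ℕ → α, (∀ n, y n ∈ K n) ∧ Tendsto y atTop (𝓝 b) := by
  have hlt : ∀ n : ℕ, hausdorffDist (K n) L < hausdorffDist (K n) L + 1 / (n + 1) :=
    fun n => lt_add_of_pos_right _ Nat.one_div_pos_of_nat
  choose y hyK hy using fun n => exists_dist_lt_of_hausdorffDist_lt' hb (hlt n) (hfin n)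
  refine ⟨y, hyK, tendsto_iff_dist_tendsto_zero.2 ?_⟩
  have hbound : Tendsto (fun n : ℕ => hausdorffDist (K n) L + 1 / (n + 1)) atTop (𝓝 0) := by
    simpa using hK.add tendsto_one_div_add_atTop_nhds_zero_nat
  exact squeeze_zero (fun _ => dist_nonneg) (fun n => (hy n).le) hbound

end HausdorffLimit

section Preference

variable {E : Type*} [NormedAddCommGroup E] [NormedSpace ℝ E] {X : Set E} {R : E → E → Prop}

def MidpointContinuous (X : Set E) (R : E → E → Prop) : Prop :=
  ∀ x ∈ X, ∀ y ∈ X, (R y x ∧ ¬ R x y) →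
    ∃ α : ℝ, 0 ≤ α ∧ α < 1 ∧ ∃ V W : Set E, IsOpen V ∧ IsOpen W ∧
      (α • x + (1 - α) • y) ∈ V ∩ X ∧ x ∈ W ∩ X ∧
      ∀ z' ∈ V ∩ X, ∀ x' ∈ W ∩ X, (R z' x' ∧ ¬ R x' z')

theorem MidpointContinuous.rel_of_tendsto_maximal (hmid : MidpointContinuous X R)
    {K : ℕ → Set E} (hK : ∀ n, Convex ℝ (K n)) (hKX : ∀ n, K n ⊆ X)
    {x y : ℕ → E} (hxmax : ∀ n, x n ∈ K n ∧ ∀ z ∈ K n, R z (x n) → R (x n) z)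
    (hyK : ∀ n, y n ∈ K n) {a b : E} (hx : Tendsto x atTop (𝓝 a))
    (hy : Tendsto y atTop (𝓝 b)) (ha : a ∈ X) (hb : b ∈ X) (hba : R b a) : R a b := by
  by_contra hab
  obtain ⟨t, ht₀, ht₁, V, W, hV, hW, hV_mem, hW_mem, hstrict⟩ := hmid a ha b hb ⟨hba, hab⟩
  set z : ℕ → E := fun n => t • x n + (1 - t) • y n
  have hz : Tendsto z atTop (𝓝 (t • a + (1 - t) • b)) :=
    (hx.const_smul t).add (hy.const_smul (1 - t))
  obtain ⟨n, hzV, hxW⟩ :=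
    ((hz.eventually (hV.mem_nhds hV_mem.1)).and (hx.eventually (hW.mem_nhds hW_mem.1))).exists
  have hzK : z n ∈ K n := (hK n) (hxmax n).1 (hyK n) ht₀ (by linarith) (by ring)
  have hzx := hstrict (z n) ⟨hzV, hKX n hzK⟩ (x n) ⟨hxW, hKX n (hxmax n).1⟩
  exact hzx.2 ((hxmax n).2 _ hzK hzx.1)

end Preference

theorem stmt_2_general {E : Type*} [NormedAddCommGroup E] [NormedSpace ℝ E]
    (X : Set E)
    (R : E → E → Prop)
    (hmid : ∀ x ∈ X, ∀ y ∈ X, (R y x ∧ ¬ R x y) →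
      ∃ α : ℝ, 0 ≤ α ∧ α < 1 ∧ ∃ V W : Set E, IsOpen V ∧ IsOpen W ∧
        (α • x + (1 - α) • y) ∈ V ∩ X ∧ x ∈ W ∩ X ∧
        ∀ z' ∈ V ∩ X, ∀ x' ∈ W ∩ X, (R z' x' ∧ ¬ R x' z'))
    (K : ℕ → Set E) (Kl : Set E) (x : ℕ → E) (xl : E)
    (hKn : ∀ n, (K n).Nonempty ∧ IsCompact (K n) ∧ Convex ℝ (K n) ∧ K n ⊆ X)
    (hKl : Kl.Nonempty) (hKlc : IsCompact Kl) (hKlX : Kl ⊆ X)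
    (hKconv : Tendsto (fun n => Metric.hausdorffDist (K n) Kl) atTop (nhds 0))
    (hxconv : Tendsto x atTop (nhds xl))
    (hxmax : ∀ n, x n ∈ K n ∧ ∀ y ∈ K n, R y (x n) → R (x n) y) :
    xl ∈ Kl ∧ ∀ y ∈ Kl, R y xl → R xl y := by
  have hfin : ∀ n, hausdorffEDist (K n) Kl ≠ ⊤ := fun n =>
    hausdorffEDist_ne_top_of_nonempty_of_bounded (hKn n).1 hKl (hKn n).2.1.isBounded
      hKlc.isBounded
  have hxl : xl ∈ Kl :=
    mem_of_tendsto_hausdorffDist hKlc.isClosed hKl hfin hKconv (fun n => (hxmax n).1) hxconv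
  refine ⟨hxl, fun b hb hba => ?_⟩
  obtain ⟨y, hyK, hy⟩ := exists_tendsto_of_tendsto_hausdorffDist hfin hKconv hb
  exact MidpointContinuous.rel_of_tendsto_maximal hmid (fun n => (hKn n).2.2.1)
    (fun n => (hKn n).2.2.2) hxmax hyK hxconv hy (hKlX hxl) (hKlX hb) hba

/-- Simple Maximum Theorem: if a continuous, midpoint continuous preference
on a convex subset X of a normed space, nonempty compact convex feasible sets Kₙ → K in
the Hausdorff metric, and maximal elements xₙ ∈ Kₙ with xₙ → x, then x is maximal in K. -/
theorem stmt_2 {E : Type*} [NormedAddCommGroup E] [NormedSpace ℝ E]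
    (X : Set E) (hX : Convex ℝ X)
    (R : E → E → Prop)
    (hrefl : ∀ x ∈ X, R x x)
    (htrans : ∀ x ∈ X, ∀ y ∈ X, ∀ z ∈ X, R x y → R y z → R x z)
    (hclosed : IsClosed {p : X × X | R p.1.1 p.2.1})
    (hmid : ∀ x ∈ X, ∀ y ∈ X, (R y x ∧ ¬ R x y) →
      ∃ α : ℝ, 0 ≤ α ∧ α < 1 ∧ ∃ V W : Set E, IsOpen V ∧ IsOpen W ∧
        (α • x + (1 - α) • y) ∈ V ∩ X ∧ x ∈ W ∩ X ∧
        ∀ z' ∈ V ∩ X, ∀ x' ∈ W ∩ X, (R z' x' ∧ ¬ R x' z'))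
    (K : ℕ → Set E) (Kl : Set E) (x : ℕ → E) (xl : E)
    (hKn : ∀ n, (K n).Nonempty ∧ IsCompact (K n) ∧ Convex ℝ (K n) ∧ K n ⊆ X)
    (hKl : Kl.Nonempty) (hKlc : IsCompact Kl) (hKlX : Kl ⊆ X)
    (hKconv : Tendsto (fun n => Metric.hausdorffDist (K n) Kl) atTop (nhds 0))
    (hxconv : Tendsto x atTop (nhds xl))
    (hxmax : ∀ n, x n ∈ K n ∧ ∀ y ∈ K n, R y (x n) → R (x n) y) :
    xl ∈ Kl ∧ ∀ y ∈ Kl, R y xl → R xl y :=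
  stmt_2_general X R hmid K Kl x xl hKn hKl hKlc hKlX hKconv hxconv hxmax
end

section
/- Let ≿_n, ≿ be continuous preferences on a metric space X with graphs converging in the Hausdorff metric, let K_n, K be nonempty compact sets with K_n → K in the Hausdorff metric, and suppose x_n ∈ Max(≿_n, K_n) with x_n → x. If additionally every Hausdorff limit of a convergent sequence (D_n) with D_n a maximal ≿_n-domain relative to K_n is a maximal ≿-domain relative to K, then x ∈ Max(≿, K). -/
/-!
Choose maximal `≿ₙ`-domains `Dₙ ∋ xₙ` relative to `Kₙ` (Zorn). They are closed because the
closure of a domain is again a domain, hence compact, and they all lie in the compact set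
`K ∪ ⋃ Kₙ`; by compactness of the Vietoris hyperspace a subsequence converges to some `D`,
which by hypothesis is a maximal `≿`-domain relative to `K`. Since `xₙ` is maximal in `Kₙ` and
`Dₙ` is complete, `xₙ` is a `≿ₙ`-best element of `Dₙ`; passing to the limit through the graphs,
`x ∈ D` is a `≿`-best element of `D`, hence `≿`-maximal in `K` by Gorno–Rivello.
-/

open Filter
open scoped ENNReal

/-- `R` is complete on `A`. -/
def CompleteOn {X : Type*} (R : X → X → Prop) (A : Set X) : Prop :=
  ∀ x ∈ A, ∀ y ∈ A, R x y ∨ R y x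

/-- `A` is a maximal `R`-domain relative to `B`. -/
def MaxDomainRel {X : Type*} (R : X → X → Prop) (B A : Set X) : Prop :=
  A ⊆ B ∧ CompleteOn R A ∧ ∀ A' : Set X, A ⊆ A' → A' ⊆ B → CompleteOn R A' → A' = A

open Topology Metric Set TopologicalSpace

section Domains

variable {X : Type*} {R : X → X → Prop} {A B D : Set X} {x y : X}

theorem completeOn_closure [TopologicalSpace X] (hR : IsClosed {p : X × X | R p.1 p.2})
    (hA : CompleteOn R A) : CompleteOn R (closure A) := by
  have hcl : IsClosed {p : X × X | R p.1 p.2 ∨ R p.2 p.1} :=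
    hR.union (hR.preimage (continuous_swap (X := X) (Y := X)))
  have hsub : closure (A ×ˢ A) ⊆ {p : X × X | R p.1 p.2 ∨ R p.2 p.1} :=
    closure_minimal (fun p hp => hA p.1 hp.1 p.2 hp.2) hcl
  intro a ha b hb
  exact hsub (closure_prod_eq.superset (mk_mem_prod ha hb))

theorem CompleteOn.sUnion {c : Set (Set X)} (hc : ∀ A ∈ c, CompleteOn R A)
    (hchain : IsChain (· ⊆ ·) c) : CompleteOn R (⋃₀ c) := by
  rintro a ⟨s, hs, has⟩ b ⟨t, ht, hbt⟩
  rcases hchain.total hs ht with hst | hts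
  · exact hc t ht a (hst has) b hbt
  · exact hc s hs a has b (hts hbt)

theorem exists_maxDomainRel_mem (hR : Reflexive R) (hx : x ∈ B) :
    ∃ D, x ∈ D ∧ MaxDomainRel R B D := by
  let S : Set (Set X) := {A | A ⊆ B ∧ x ∈ A ∧ CompleteOn R A}
  have hxS : {x} ∈ S := ⟨singleton_subset_iff.2 hx, rfl, by
    rintro _ rfl _ rfl; exact Or.inl (hR _)⟩
  obtain ⟨D, -, ⟨hDB, hxD, hDc⟩, hDmax⟩ := zorn_subset_nonempty S
    (fun c hcS hchain ⟨A, hA⟩ => ⟨⋃₀ c,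
      ⟨sUnion_subset fun A hA => (hcS hA).1, mem_sUnion.2 ⟨A, hA, (hcS hA).2.1⟩,
        CompleteOn.sUnion (fun A hA => (hcS hA).2.2) hchain⟩,
      fun _ => subset_sUnion_of_mem⟩) _ hxS
  exact ⟨D, hxD, hDB, hDc, fun A' hDA' hA'B hA'c =>
    (hDmax ⟨hA'B, hDA' hxD, hA'c⟩ hDA').antisymm hDA'⟩

theorem MaxDomainRel.isClosed [TopologicalSpace X] (hR : IsClosed {p : X × X | R p.1 p.2})
    (hB : IsClosed B) (hD : MaxDomainRel R B D) : IsClosed D := by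
  rw [← hD.2.2 _ subset_closure (closure_minimal hD.1 hB) (completeOn_closure hR hD.2.1)]
  exact isClosed_closure

theorem CompleteOn.rel_of_maximal (hA : CompleteOn R A) (hAB : A ⊆ B) (hx : x ∈ A)
    (hmax : ∀ y ∈ B, R y x → R x y) (hy : y ∈ A) : R x y :=
  (hA x hx y hy).elim id (hmax y (hAB hy))

/-- Gorno–Rivello (2018), Theorem 1. -/
theorem MaxDomainRel.rel_of_best (hR : Reflexive R) (hRt : Transitive R)
    (hD : MaxDomainRel R B D) (hbest : ∀ d ∈ D, R x d) (hy : y ∈ B)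
    (hyx : R y x) : R x y := by
  have hins : CompleteOn R (insert y D) := by
    rintro a (rfl | ha) b (rfl | hb)
    · exact Or.inl (hR _)
    · exact Or.inl (hRt hyx (hbest b hb))
    · exact Or.inr (hRt hyx (hbest a ha))
    · exact hD.2.1 a ha b hb
  refine hbest y ?_
  rw [← hD.2.2 _ (subset_insert y D) (insert_subset hy hD.1) hins]
  exact mem_insert y D

end Domains

section Hausdorff

variable {X : Type*} {ι : Type*} {l : Filter ι}

theorem mem_of_tendsto_hausdorffEDist [PseudoEMetricSpace X] [l.NeBot] {S : ι → Set X}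
    {T : Set X} {p : ι → X} {q : X} (hT : IsClosed T)
    (hST : Tendsto (fun i => hausdorffEDist (S i) T) l (𝓝 0)) (hp : ∀ i, p i ∈ S i)
    (hpq : Tendsto p l (𝓝 q)) : q ∈ T := by
  have hlim : Tendsto (fun i => infEDist (p i) T) l (𝓝 0) :=
    tendsto_of_tendsto_of_tendsto_of_le_of_le tendsto_const_nhds hST (fun _ => zero_le)
      fun i => infEDist_le_hausdorffEDist_of_mem (hp i)
  have hq : infEDist q T = 0 := tendsto_nhds_unique ((continuous_infEDist.tendsto q).comp hpq) hlim
  exact hT.closure_subset (mem_closure_iff_infEDist_zero.2 hq)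

theorem exists_tendsto_of_tendsto_hausdorffEDist [PseudoEMetricSpace X] {S : ι → Set X}
    {T : Set X} {q : X} (hS : ∀ i, IsCompact (S i)) (hne : ∀ i, (S i).Nonempty)
    (hST : Tendsto (fun i => hausdorffEDist (S i) T) l (𝓝 0)) (hq : q ∈ T) :
    ∃ p : ι → X, (∀ i, p i ∈ S i) ∧ Tendsto p l (𝓝 q) := by
  choose p hpS hp using fun i => (hS i).exists_infEDist_eq_edist (hne i) q
  refine ⟨p, hpS, tendsto_iff_edist_tendsto_0.2 ?_⟩
  refine tendsto_of_tendsto_of_tendsto_of_le_of_le tendsto_const_nhds hST (fun _ => zero_le)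
    fun i => ?_
  rw [edist_comm, ← hp i, hausdorffEDist_comm]
  exact infEDist_le_hausdorffEDist_of_mem hq

theorem rel_of_tendsto_hausdorffEDist_graph [PseudoEMetricSpace X] [l.NeBot]
    {Rs : ι → X → X → Prop} {R : X → X → Prop} (hR : IsClosed {p : X × X | R p.1 p.2})
    (hRs : Tendsto (fun i => hausdorffEDist {p : X × X | Rs i p.1 p.2} {p | R p.1 p.2}) l (𝓝 0))
    {a b : ι → X} {a₀ b₀ : X} (ha : Tendsto a l (𝓝 a₀)) (hb : Tendsto b l (𝓝 b₀))
    (hab : ∀ i, Rs i (a i) (b i)) : R a₀ b₀ :=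
  mem_of_tendsto_hausdorffEDist (p := fun i => (a i, b i)) hR hRs hab (ha.prodMk_nhds hb)

theorem tendsto_hausdorffDist_of_tendsto_hausdorffEDist [PseudoMetricSpace X] {S : ι → Set X}
    {T : Set X} (h : Tendsto (fun i => hausdorffEDist (S i) T) l (𝓝 0)) :
    Tendsto (fun i => hausdorffDist (S i) T) l (𝓝 0) := by
  have h' := (ENNReal.tendsto_toReal ENNReal.zero_ne_top).comp h
  rw [ENNReal.toReal_zero] at h'
  exact h'

theorem tendsto_hausdorffEDist_of_tendsto_hausdorffDist [PseudoMetricSpace X] {S : ι → Set X}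
    {T : Set X} (hfin : ∀ i, hausdorffEDist (S i) T ≠ ∞)
    (h : Tendsto (fun i => hausdorffDist (S i) T) l (𝓝 0)) :
    Tendsto (fun i => hausdorffEDist (S i) T) l (𝓝 0) :=
  (ENNReal.tendsto_toReal_iff hfin ENNReal.zero_ne_top).1 (by rw [ENNReal.toReal_zero]; exact h)

theorem isCompact_union_iUnion_of_tendsto_hausdorffEDist [EMetricSpace X] {K : ℕ → Set X}
    {Kl : Set X} (hK : ∀ n, IsCompact (K n)) (hKl : IsCompact Kl)
    (h : Tendsto (fun n => hausdorffEDist (K n) Kl) atTop (𝓝 0)) :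
    IsCompact (Kl ∪ ⋃ n, K n) := by
  have hconv : Tendsto (fun n => (⟨K n, hK n⟩ : Compacts X)) atTop (𝓝 ⟨Kl, hKl⟩) :=
    tendsto_iff_edist_tendsto_0.2 h
  simpa [biUnion_insert, biUnion_range] using
    Compacts.isCompact_biUnion_coe_of_isCompact hconv.isCompact_insert_range

/-- Blaschke selection in a compact set. -/
theorem exists_subseq_tendsto_hausdorffEDist [EMetricSpace X] {U : Set X} (hU : IsCompact U)
    {D : ℕ → Set X} (hD : ∀ n, IsCompact (D n)) (hDU : ∀ n, D n ⊆ U) :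
    ∃ Dl : Set X, IsCompact Dl ∧ ∃ φ : ℕ → ℕ, StrictMono φ ∧
      Tendsto (fun k => hausdorffEDist (D (φ k)) Dl) atTop (𝓝 0) := by
  obtain ⟨L, -, φ, hφ, hL⟩ := (Compacts.isCompact_subsets_of_isCompact hU).tendsto_subseq
    (x := fun n => ⟨D n, hD n⟩) hDU
  exact ⟨L, L.isCompact, φ, hφ, tendsto_iff_edist_tendsto_0.1 hL⟩

end Hausdorff

theorem stmt_9_general {X : Type*} [MetricSpace X]
    (Rn : ℕ → X → X → Prop) (R : X → X → Prop)
    (hrefln : ∀ n, Reflexive (Rn n))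
    (hrefl : Reflexive R) (htrans : Transitive R)
    (hclosedn : ∀ n, IsClosed {p : X × X | Rn n p.1 p.2})
    (hclosed : IsClosed {p : X × X | R p.1 p.2})
    (hRconv : Tendsto
      (fun n => EMetric.hausdorffEdist {p : X × X | Rn n p.1 p.2} {p : X × X | R p.1 p.2})
      atTop (nhds (0 : ℝ≥0∞)))
    (K : ℕ → Set X) (Kl : Set X)
    (hKn : ∀ n, (K n).Nonempty ∧ IsCompact (K n))
    (hKl : Kl.Nonempty) (hKlc : IsCompact Kl)
    (hKconv : Tendsto (fun n => Metric.hausdorffDist (K n) Kl) atTop (nhds 0))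
    (x : ℕ → X) (xl : X)
    (hxconv : Tendsto x atTop (nhds xl))
    (hxmax : ∀ n, x n ∈ K n ∧ ∀ y ∈ K n, Rn n y (x n) → Rn n (x n) y)
    (hdomconv : ∀ (D : ℕ → Set X), (∀ n, MaxDomainRel (Rn n) (K n) (D n)) →
      ∀ (φ : ℕ → ℕ), StrictMono φ → ∀ (Dl : Set X), Dl.Nonempty → IsCompact Dl →
        Tendsto (fun k => Metric.hausdorffDist (D (φ k)) Dl) atTop (nhds 0) →
        MaxDomainRel R Kl Dl) :
    xl ∈ Kl ∧ ∀ y ∈ Kl, R y xl → R xl y := by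
  choose D hxD hD using fun n => exists_maxDomainRel_mem (hrefln n) (hxmax n).1
  have hDc : ∀ n, IsCompact (D n) := fun n =>
    (hKn n).2.of_isClosed_subset ((hD n).isClosed (hclosedn n) (hKn n).2.isClosed) (hD n).1
  have hKfin : ∀ n, hausdorffEDist (K n) Kl ≠ ∞ := fun n =>
    hausdorffEDist_ne_top_of_nonempty_of_bounded (hKn n).1 hKl (hKn n).2.isBounded
      hKlc.isBounded
  have hU := isCompact_union_iUnion_of_tendsto_hausdorffEDist (fun n => (hKn n).2) hKlc
    (tendsto_hausdorffEDist_of_tendsto_hausdorffDist hKfin hKconv)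
  obtain ⟨Dl, hDlc, φ, hφ, hDφ⟩ := exists_subseq_tendsto_hausdorffEDist hU hDc fun n =>
    (hD n).1.trans ((subset_iUnion K n).trans subset_union_right)
  have hxφ := hxconv.comp hφ.tendsto_atTop
  have hxlDl : xl ∈ Dl :=
    mem_of_tendsto_hausdorffEDist hDlc.isClosed hDφ (fun k => hxD (φ k)) hxφ
  have hDl : MaxDomainRel R Kl Dl := hdomconv D hD φ hφ Dl ⟨xl, hxlDl⟩ hDlc
    (tendsto_hausdorffDist_of_tendsto_hausdorffEDist hDφ)
  refine ⟨hDl.1 hxlDl, fun y hy => hDl.rel_of_best hrefl htrans (fun d hd => ?_) hy⟩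
  obtain ⟨z, hzD, hz⟩ := exists_tendsto_of_tendsto_hausdorffEDist (fun k => hDc (φ k))
    (fun k => ⟨x (φ k), hxD (φ k)⟩) hDφ hd
  exact rel_of_tendsto_hausdorffEDist_graph hclosed (hRconv.comp hφ.tendsto_atTop) hxφ hz
    fun k => (hD (φ k)).2.1.rel_of_maximal (hD (φ k)).1 (hxD (φ k)) (hxmax (φ k)).2 (hzD k)

/-- General Maximum Theorem: with continuous preferences ≿ₙ → ≿,
compact sets Kₙ → K, maximal elements xₙ → x, and upper hemicontinuity of maximal
domains of comparability, x is ≿-maximal in K. -/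
theorem stmt_9 {X : Type*} [MetricSpace X]
    (Rn : ℕ → X → X → Prop) (R : X → X → Prop)
    (hrefln : ∀ n, Reflexive (Rn n)) (htransn : ∀ n, Transitive (Rn n))
    (hrefl : Reflexive R) (htrans : Transitive R)
    (hclosedn : ∀ n, IsClosed {p : X × X | Rn n p.1 p.2})
    (hclosed : IsClosed {p : X × X | R p.1 p.2})
    (hRconv : Tendsto
      (fun n => EMetric.hausdorffEdist {p : X × X | Rn n p.1 p.2} {p : X × X | R p.1 p.2})
      atTop (nhds (0 : ℝ≥0∞)))
    (K : ℕ → Set X) (Kl : Set X)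
    (hKn : ∀ n, (K n).Nonempty ∧ IsCompact (K n))
    (hKl : Kl.Nonempty) (hKlc : IsCompact Kl)
    (hKconv : Tendsto (fun n => Metric.hausdorffDist (K n) Kl) atTop (nhds 0))
    (x : ℕ → X) (xl : X)
    (hxconv : Tendsto x atTop (nhds xl))
    (hxmax : ∀ n, x n ∈ K n ∧ ∀ y ∈ K n, Rn n y (x n) → Rn n (x n) y)
    (hdomconv : ∀ (D : ℕ → Set X), (∀ n, MaxDomainRel (Rn n) (K n) (D n)) →
      ∀ (φ : ℕ → ℕ), StrictMono φ → ∀ (Dl : Set X), Dl.Nonempty → IsCompact Dl →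
        Tendsto (fun k => Metric.hausdorffDist (D (φ k)) Dl) atTop (nhds 0) →
        MaxDomainRel R Kl Dl) :
    xl ∈ Kl ∧ ∀ y ∈ Kl, R y xl → R xl y :=
  stmt_9_general Rn R hrefln hrefl htrans hclosedn hclosed hRconv K Kl hKn hKl hKlc hKconv x xl
    hxconv hxmax hdomconv
end

section
/- Let X be [0,1] and define ≿ as the relation {(x,y) ∈ [0,0.5)² : x = y} ∪ [0.5,1]². Then ≿ is a continuous (closed) reflexive transitive relation, and for K_n = [0.5 − 0.5/n, 1], the singleton D_n = {0.5 − 0.5/n} is a maximal ≿-domain relative to K_n, the sets D_n converge to {0.5}, yet {0.5} is not a maximal ≿-domain relative to K = [0.5, 1]. -/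
open Filter

/-! The points below `1/2` are comparable only with themselves, so a singleton `{x}` with
`x < 1/2` has no proper complete extension inside `[x, 1]`. At the limit point `1/2` this
isolation is lost: `[1/2, 1]` is a single indifference class, a complete set strictly
containing `{1/2}`. -/

section Domains

variable {X : Type*} {R : X → X → Prop} {A A' B : Set X}

theorem maxDomainRel_singleton {x : X} (hxB : x ∈ B) (hxx : R x x)
    (hiso : ∀ y ∈ B, R x y ∨ R y x → y = x) : MaxDomainRel R B {x} := by
  refine ⟨Set.singleton_subset_iff.mpr hxB, ?_, fun A' hxA' hA'B hA' => ?_⟩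
  · rintro _ rfl _ rfl
    exact Or.inl hxx
  · have hx : x ∈ A' := hxA' rfl
    exact Set.eq_singleton_iff_unique_mem.mpr
      ⟨hx, fun y hy => hiso y (hA'B hy) (hA' x hx y hy)⟩

theorem not_maxDomainRel_of_ssubset (hAA' : A ⊂ A') (hA'B : A' ⊆ B) (hA' : CompleteOn R A') :
    ¬ MaxDomainRel R B A :=
  fun ⟨_, _, hmax⟩ => hAA'.ne (hmax A' hAA'.subset hA'B hA').symm

end Domains

def splitRel (a c b : ℝ) (x y : ℝ) : Prop :=
  (x = y ∧ x ∈ Set.Ico a c) ∨ (x ∈ Set.Icc c b ∧ y ∈ Set.Icc c b)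

namespace splitRel

variable {a c b x y z : ℝ}

theorem refl (hx : x ∈ Set.Icc a b) : splitRel a c b x x := by
  rcases lt_or_ge x c with h | h
  · exact Or.inl ⟨rfl, hx.1, h⟩
  · exact Or.inr ⟨⟨h, hx.2⟩, h, hx.2⟩

theorem trans : splitRel a c b x y → splitRel a c b y z → splitRel a c b x z := by
  rintro (⟨rfl, hx⟩ | ⟨hx, hy⟩) (⟨rfl, hy'⟩ | ⟨hy', hz⟩)
  · exact Or.inl ⟨rfl, hx⟩
  · exact Or.inr ⟨hy', hz⟩
  · exact absurd hy.1 hy'.2.not_ge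
  · exact Or.inr ⟨hx, hz⟩

/-- The closure of the graph of `[a, c)` only adds `(c, c)`, which already lies in `[c, b]²`. -/
theorem setOf_eq (hcb : c ≤ b) :
    {p : ℝ × ℝ | splitRel a c b p.1 p.2} =
      ({p | p.1 = p.2} ∩ Set.Icc a c ×ˢ Set.univ) ∪ Set.Icc c b ×ˢ Set.Icc c b := by
  ext ⟨x, y⟩
  simp only [splitRel, Set.mem_ofPred_eq, Set.mem_union, Set.mem_inter_iff, Set.mem_prod,
    Set.mem_univ, and_true, Set.mem_Icc, Set.mem_Ico]
  constructor
  · rintro (⟨rfl, hax, hxc⟩ | h)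
    · exact Or.inl ⟨rfl, hax, hxc.le⟩
    · exact Or.inr h
  · rintro (⟨rfl, hax, hxc⟩ | h)
    · rcases hxc.lt_or_eq with hxc | rfl
      · exact Or.inl ⟨rfl, hax, hxc⟩
      · exact Or.inr ⟨⟨le_rfl, hcb⟩, le_rfl, hcb⟩
    · exact Or.inr h

theorem isClosed (hcb : c ≤ b) : IsClosed {p : ℝ × ℝ | splitRel a c b p.1 p.2} := by
  rw [setOf_eq hcb]
  exact ((isClosed_eq continuous_fst continuous_snd).inter (isClosed_Icc.prod isClosed_univ)).union
    (isClosed_Icc.prod isClosed_Icc)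

theorem eq_of_lt (hx : x < c) : splitRel a c b x y ∨ splitRel a c b y x → y = x := by
  rintro ((⟨h, -⟩ | ⟨h, -⟩) | (⟨h, -⟩ | ⟨-, h⟩))
  · exact h.symm
  · exact absurd h.1 hx.not_ge
  · exact h
  · exact absurd h.1 hx.not_ge

theorem completeOn_Icc : CompleteOn (splitRel a c b) (Set.Icc c b) :=
  fun _ hx _ hy => Or.inl (Or.inr ⟨hx, hy⟩)

theorem maxDomainRel_singleton_of_lt (hax : a ≤ x) (hxc : x < c) (hxb : x ≤ b) :
    MaxDomainRel (splitRel a c b) (Set.Icc x b) {x} :=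
  _root_.maxDomainRel_singleton ⟨le_rfl, hxb⟩ (refl ⟨hax, hxb⟩) fun _ _ => eq_of_lt hxc

end splitRel

theorem tendsto_hausdorffDist_singleton_iff {α ι : Type*} [PseudoMetricSpace α] {l : Filter ι}
    {u : ι → α} {a : α} :
    Tendsto (fun i => Metric.hausdorffDist {u i} {a}) l (nhds 0) ↔ Tendsto u l (nhds a) := by
  simp only [Metric.hausdorffDist_singleton, ← tendsto_iff_dist_tendsto_zero]

/-- The relation {(x,y) ∈ [0,0.5)² : x = y} ∪ [0.5,1]² on [0,1] is a
continuous (closed) reflexive transitive relation; Dₙ = {0.5 − 0.5/n} is a maximal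
domain relative to Kₙ = [0.5 − 0.5/n, 1]; Dₙ → {0.5} in the Hausdorff metric; yet
{0.5} is not a maximal domain relative to [0.5, 1]. -/
theorem stmt_12 :
    let R : ℝ → ℝ → Prop := fun x y =>
      (x = y ∧ x ∈ Set.Ico (0:ℝ) (1/2)) ∨ (x ∈ Set.Icc (1/2:ℝ) 1 ∧ y ∈ Set.Icc (1/2:ℝ) 1)
    (∀ x ∈ Set.Icc (0:ℝ) 1, R x x) ∧
    (∀ x y z : ℝ, R x y → R y z → R x z) ∧
    IsClosed {p : ℝ × ℝ | R p.1 p.2} ∧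
    (∀ n : ℕ, MaxDomainRel R (Set.Icc (1/2 - 1/2/(n+1) : ℝ) 1) {(1/2 - 1/2/(n+1) : ℝ)}) ∧
    Tendsto (fun n : ℕ => Metric.hausdorffDist {(1/2 - 1/2/(n+1) : ℝ)} ({(1/2 : ℝ)} : Set ℝ))
      atTop (nhds 0) ∧
    ¬ MaxDomainRel R (Set.Icc (1/2:ℝ) 1) {(1/2 : ℝ)} := by
  intro R
  refine ⟨fun x => splitRel.refl, fun x y z => splitRel.trans, splitRel.isClosed (by norm_num),
    fun n => ?_, ?_, ?_⟩
  · have hpos : (0 : ℝ) < 1/2/(n+1) := by positivity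
    have hle : (1/2)/((n : ℝ)+1) ≤ 1/2 := div_le_self (by norm_num) (by simp)
    exact splitRel.maxDomainRel_singleton_of_lt (by linarith) (by linarith) (by linarith)
  · rw [tendsto_hausdorffDist_singleton_iff]
    simpa [div_eq_mul_inv] using
      tendsto_const_nhds.sub (tendsto_one_div_add_atTop_nhds_zero_nat.const_mul (1/2 : ℝ))
  · refine not_maxDomainRel_of_ssubset ?_ subset_rfl splitRel.completeOn_Icc
    exact (Set.ssubset_iff_of_subset (by norm_num)).mpr ⟨1, by norm_num, by norm_num⟩
end

section
/- Let ≿ be the componentwise (product) order on X = [0,1]², let K_n = {(x₁,x₂) ∈ X : x₂ ≤ n(1 − x₁)}. Then each K_n is nonempty and compact, K_n → [0,1]² in the Hausdorff metric, the point (1,0) is ≿-maximal in K_n for every n, but (1,0) is not ≿-maximal in [0,1]². -/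
open Filter Set Metric

/-!
Cutting the unit square along the line through `(1, 0)` and `(1 - 1/c, 1)` removes only a
triangle of width `1/c`, so the cut squares converge to the square in the Hausdorff metric. Yet
in every cut square the only point above `(1, 0)` in the product order is `(1, 0)` itself, while
in the full square `(1, 1)` lies strictly above it: maximality is not preserved in the limit.
-/

def cutSquare (c : ℝ) : Set (ℝ × ℝ) := {p ∈ Icc (0, 0) (1, 1) | p.2 ≤ c * (1 - p.1)}

theorem isCompact_cutSquare (c : ℝ) : IsCompact (cutSquare c) :=
  isCompact_Icc.inter_right <|
    isClosed_le continuous_snd (continuous_const.mul (continuous_const.sub continuous_fst))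

theorem one_zero_mem_cutSquare (c : ℝ) : ((1 : ℝ), (0 : ℝ)) ∈ cutSquare c :=
  ⟨⟨⟨zero_le_one, le_rfl⟩, ⟨le_rfl, zero_le_one⟩⟩, by simp⟩

theorem le_one_zero_of_mem_cutSquare {c : ℝ} {y : ℝ × ℝ} (hy : y ∈ cutSquare c)
    (h : ((1 : ℝ), (0 : ℝ)) ≤ y) : y ≤ (1, 0) := by
  obtain ⟨⟨-, hy1⟩, hyc⟩ := hy
  have hy₁ : y.1 = 1 := le_antisymm hy1.1 h.1
  rw [hy₁, sub_self, mul_zero] at hyc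
  exact ⟨hy₁.le, hyc⟩

theorem hausdorffDist_cutSquare_le {c : ℝ} (hc : 1 ≤ c) :
    hausdorffDist (cutSquare c) (Icc (0, 0) (1, 1)) ≤ c⁻¹ := by
  have hc₀ : 0 < c := zero_lt_one.trans_le hc
  have hinv₀ : 0 ≤ c⁻¹ := inv_nonneg.2 hc₀.le
  have hinv : c⁻¹ ≤ 1 := inv_le_one_of_one_le₀ hc
  refine hausdorffDist_le_of_mem_dist hinv₀ (fun x hx => ⟨x, hx.1, by simp [hinv₀]⟩)
    fun x hx => ?_
  obtain ⟨⟨hx₁, hx₂⟩, hx₁', hx₂'⟩ := hx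
  dsimp only at hx₁ hx₂ hx₁' hx₂'
  -- the removed triangle lies in the strip `1 - c⁻¹ < p.1`; move `x` left out of it
  set t := min x.1 (1 - c⁻¹)
  have ht : t ≤ 1 - c⁻¹ := min_le_right _ _
  have hx_t : x.1 - c⁻¹ ≤ t := le_min (by linarith) (by linarith)
  have hmem : (t, x.2) ∈ cutSquare c := by
    refine ⟨⟨⟨le_min hx₁ (by linarith), hx₂⟩, ⟨ht.trans (by simp [hinv₀]), hx₂'⟩⟩, ?_⟩
    calc x.2 ≤ 1 := hx₂'
      _ = c * c⁻¹ := (mul_inv_cancel₀ hc₀.ne').symm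
      _ ≤ c * (1 - t) := by gcongr; linarith
  refine ⟨(t, x.2), hmem, ?_⟩
  rw [Prod.dist_eq, dist_self, Real.dist_eq, abs_of_nonneg (sub_nonneg.2 (min_le_left _ _))]
  exact max_le (by linarith) hinv₀

theorem tendsto_hausdorffDist_cutSquare :
    Tendsto (fun n : ℕ => hausdorffDist (cutSquare n) (Icc (0, 0) (1, 1))) atTop (nhds 0) :=
  tendsto_of_tendsto_of_tendsto_of_le_of_le' tendsto_const_nhds tendsto_inv_atTop_nhds_zero_nat
    (Eventually.of_forall fun _ => hausdorffDist_nonneg)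
    (eventually_ge_atTop 1 |>.mono fun _ hn => hausdorffDist_cutSquare_le (by exact_mod_cast hn))

/-- With the product order on X = [0,1]² and
Kₙ = {(x₁,x₂) ∈ X : x₂ ≤ n(1 − x₁)}, each Kₙ is nonempty compact, Kₙ → X in the
Hausdorff metric, (1,0) is maximal in every Kₙ, but (1,0) is not maximal in X. -/
theorem stmt_13 :
    let X : Set (ℝ × ℝ) := Set.Icc (0, 0) (1, 1)
    let R : ℝ × ℝ → ℝ × ℝ → Prop := fun p q => q ≤ p
    let K : ℕ → Set (ℝ × ℝ) := fun n => {p ∈ X | p.2 ≤ (n : ℝ) * (1 - p.1)}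
    (∀ n, (K n).Nonempty ∧ IsCompact (K n)) ∧
    Tendsto (fun n => Metric.hausdorffDist (K n) X) atTop (nhds 0) ∧
    (∀ n, ((1:ℝ), (0:ℝ)) ∈ K n ∧ ∀ y ∈ K n, R y (1, 0) → R (1, 0) y) ∧
    ¬ (∀ y ∈ X, R y ((1:ℝ), (0:ℝ)) → R ((1:ℝ), (0:ℝ)) y) := by
  intro X R K
  refine ⟨fun n => ⟨⟨_, one_zero_mem_cutSquare n⟩, isCompact_cutSquare n⟩,
    tendsto_hausdorffDist_cutSquare,
    fun n => ⟨one_zero_mem_cutSquare n, fun y hy => le_one_zero_of_mem_cutSquare hy⟩, ?_⟩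
  intro h
  have h11 : ((1 : ℝ), (1 : ℝ)) ∈ X := ⟨⟨zero_le_one, zero_le_one⟩, ⟨le_rfl, le_rfl⟩⟩
  have : (1 : ℝ) ≤ 0 := (h (1, 1) h11 ⟨le_rfl, zero_le_one⟩).2
  norm_num at this
end

section
/- Consider X = ℝ₊², the preference ≿ represented by the multi-utility {u₁, u₂} with u₁(a,b) = a + b and u₂(a,b) = a + 2b, and budget sets B_n = {(a,b) ∈ ℝ₊² : a + (1 + 1/n)b ≤ 1}. Then (1,0) is ≿-maximal in B_n for every n ∈ ℕ, the sets B_n converge in the Hausdorff metric to B = {(a,b) ∈ ℝ₊² : a + b ≤ 1}, but (1,0) is not ≿-maximal in B since (0,1) ∈ B and (0,1) ≻ (1,0). -/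
open Filter Metric
open scoped Pointwise

/-!
Write `Bₖ = budgetSet k`. For `k > 1` the line `a + k b = 1` is steeper than the indifference
lines of `u₁`, so `(1,0)` is the only point of `Bₖ` with `u₁ ≥ 1`, hence the only point of `Bₖ`
weakly preferred to `(1,0)`. The sets `Bₖ` approach `B₁` by scaling: `k⁻¹ • B₁ ⊆ Bₖ ⊆ B₁`, and
moving a point of the unit triangle by the factor `k⁻¹` costs at most `1 - k⁻¹ ≤ k - 1`, which
tends to `0` along `k = 1 + 1/(n+1)`.
-/

/-- A point within `(1 - c) r` of each `x ∈ s` is `c • x`. -/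
theorem hausdorffDist_le_of_smul_subset {E : Type*} [NormedAddCommGroup E] [NormedSpace ℝ E]
    {s t : Set E} {c r : ℝ} (hc₁ : c ≤ 1) (hr : 0 ≤ r)
    (hcst : c • s ⊆ t) (hts : t ⊆ s) (hs : ∀ x ∈ s, ‖x‖ ≤ r) :
    hausdorffDist t s ≤ (1 - c) * r := by
  have hc : 0 ≤ 1 - c := sub_nonneg.mpr hc₁
  apply hausdorffDist_le_of_mem_dist (mul_nonneg hc hr)
  · exact fun x hx => ⟨x, hts hx, by rw [dist_self]; positivity⟩
  · intro x hx
    refine ⟨c • x, hcst (Set.smul_mem_smul_set hx), ?_⟩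
    calc dist x (c • x) = ‖(1 - c) • x‖ := by rw [dist_eq_norm, sub_smul, one_smul]
      _ = (1 - c) * ‖x‖ := by rw [norm_smul, Real.norm_of_nonneg hc]
      _ ≤ (1 - c) * r := mul_le_mul_of_nonneg_left (hs x hx) hc

def budgetSet (k : ℝ) : Set (ℝ × ℝ) :=
  {p | 0 ≤ p.1 ∧ 0 ≤ p.2 ∧ p.1 + k * p.2 ≤ 1}

theorem budgetSet_one : budgetSet 1 = {p : ℝ × ℝ | 0 ≤ p.1 ∧ 0 ≤ p.2 ∧ p.1 + p.2 ≤ 1} := by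
  simp only [budgetSet, one_mul]

theorem budgetSet_anti {k k' : ℝ} (h : k ≤ k') : budgetSet k' ⊆ budgetSet k :=
  fun _ ⟨ha, hb, hab⟩ => ⟨ha, hb, by nlinarith⟩

theorem smul_budgetSet_one_subset {k : ℝ} (hk : 1 ≤ k) : k⁻¹ • budgetSet 1 ⊆ budgetSet k := by
  rintro _ ⟨⟨a, b⟩, ⟨ha, hb, hab⟩, rfl⟩
  have hk₀ : 0 < k := by linarith
  have hk' : 0 < k⁻¹ := inv_pos.mpr hk₀
  refine ⟨by simp only [Prod.smul_fst, smul_eq_mul]; positivity,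
    by simp only [Prod.smul_snd, smul_eq_mul]; positivity, ?_⟩
  simp only [Prod.smul_fst, Prod.smul_snd, smul_eq_mul]
  rw [← mul_assoc, mul_inv_cancel₀ hk₀.ne', one_mul]
  have : k⁻¹ * a ≤ a := mul_le_of_le_one_left ha (inv_le_one_of_one_le₀ hk)
  nlinarith

theorem norm_le_one_of_mem_budgetSet_one {p : ℝ × ℝ} (hp : p ∈ budgetSet 1) : ‖p‖ ≤ 1 := by
  obtain ⟨ha, hb, hab⟩ := hp
  rw [Prod.norm_def, Real.norm_of_nonneg ha, Real.norm_of_nonneg hb]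
  exact max_le (by linarith) (by linarith)

theorem hausdorffDist_budgetSet_one_le {k : ℝ} (hk : 1 ≤ k) :
    hausdorffDist (budgetSet k) (budgetSet 1) ≤ k - 1 := by
  have hk₀ : 0 < k := by linarith
  calc hausdorffDist (budgetSet k) (budgetSet 1) ≤ (1 - k⁻¹) * 1 :=
        hausdorffDist_le_of_smul_subset (inv_le_one_of_one_le₀ hk)
          zero_le_one (smul_budgetSet_one_subset hk) (budgetSet_anti hk)
          fun _ => norm_le_one_of_mem_budgetSet_one
    _ = (k - 1) / k := by field_simp
    _ ≤ k - 1 := div_le_self (by linarith) hk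

theorem eq_of_mem_budgetSet_of_one_le_add {k : ℝ} (hk : 1 < k) {p : ℝ × ℝ}
    (hp : p ∈ budgetSet k) (h : 1 ≤ p.1 + p.2) : p = (1, 0) := by
  obtain ⟨ha, hb₀, hab⟩ := hp
  have hb : p.2 = 0 := by nlinarith
  rw [hb, mul_zero] at hab
  exact Prod.ext (show p.1 = 1 by linarith) hb

/-- With the multi-utility u₁(a,b) = a + b, u₂(a,b) = a + 2b on ℝ₊² and
budget sets Bₙ = {(a,b) ∈ ℝ₊² : a + (1 + 1/n)b ≤ 1}, the bundle (1,0) is maximal in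
every Bₙ, Bₙ → B = {(a,b) ∈ ℝ₊² : a + b ≤ 1} in the Hausdorff metric, but (1,0) is not
maximal in B since (0,1) ∈ B and (0,1) ≻ (1,0). -/
theorem stmt_14 :
    let u₁ : ℝ × ℝ → ℝ := fun p => p.1 + p.2
    let u₂ : ℝ × ℝ → ℝ := fun p => p.1 + 2 * p.2
    let R : ℝ × ℝ → ℝ × ℝ → Prop := fun p q => u₁ q ≤ u₁ p ∧ u₂ q ≤ u₂ p
    let B : ℕ → Set (ℝ × ℝ) := fun n =>
      {p | 0 ≤ p.1 ∧ 0 ≤ p.2 ∧ p.1 + (1 + 1/((n:ℝ)+1)) * p.2 ≤ 1}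
    let Bl : Set (ℝ × ℝ) := {p | 0 ≤ p.1 ∧ 0 ≤ p.2 ∧ p.1 + p.2 ≤ 1}
    (∀ n, ((1:ℝ), (0:ℝ)) ∈ B n ∧ ∀ y ∈ B n, R y (1, 0) → R (1, 0) y) ∧
    Tendsto (fun n => Metric.hausdorffDist (B n) Bl) atTop (nhds 0) ∧
    ((0:ℝ), (1:ℝ)) ∈ Bl ∧
    (R (0, 1) (1, 0) ∧ ¬ R (1, 0) (0, 1)) ∧
    ¬ (∀ y ∈ Bl, R y ((1:ℝ), (0:ℝ)) → R ((1:ℝ), (0:ℝ)) y) := by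
  intro u₁ u₂ R B Bl
  have hk : ∀ n : ℕ, (1 : ℝ) < 1 + 1 / ((n : ℝ) + 1) := fun n => by simp; positivity
  have hBl : Bl = budgetSet 1 := budgetSet_one.symm
  have h01 : ((0:ℝ), (1:ℝ)) ∈ Bl := by norm_num [hBl, budgetSet]
  have hR01 : R (0, 1) (1, 0) ∧ ¬ R (1, 0) (0, 1) := by norm_num [R, u₁, u₂]
  refine ⟨fun n => ⟨by norm_num [B], ?_⟩, ?_, h01, hR01, fun hmax => hR01.2 (hmax _ h01 hR01.1)⟩
  · rintro y hy ⟨h₁, -⟩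
    rw [eq_of_mem_budgetSet_of_one_le_add (hk n) hy (by simpa [u₁] using h₁)]
    exact ⟨le_rfl, le_rfl⟩
  · rw [hBl]
    refine squeeze_zero (fun _ => hausdorffDist_nonneg)
      (fun n => (hausdorffDist_budgetSet_one_le (hk n).le).trans_eq (add_sub_cancel_left _ _))
      tendsto_one_div_add_atTop_nhds_zero_nat
end

section
/- Let ≿_n be a sequence of reflexive transitive relations on a metric space X whose graphs converge in the Hausdorff metric to the graph of a relation ≿, and let D_n ⊆ K_n be sets on which ≿_n is complete, with D_n → D in the Hausdorff metric on compact sets. Then ≿ is complete on D (i.e., D is a ≿-domain). -/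
open Filter Topology Metric Bornology
open scoped ENNReal

/-!
Given `x, y ∈ D`, pick nearest points `xₙ, yₙ ∈ Dₙ`; they converge to `x, y` because
`infDist x Dₙ ≤ hausdorffDist Dₙ D → 0`. Completeness of `≿ₙ` on `Dₙ` gives `xₙ ≿ₙ yₙ` or
`yₙ ≿ₙ xₙ`, and one of the two alternatives happens for infinitely many `n`. A limit of points
lying frequently on graphs that converge in the Hausdorff distance lies on the closure of the
limit graph, which is the graph of `≿` since that graph is closed.
-/

theorem mem_closure_of_frequently_mem_of_tendsto_hausdorffEDist {α ι : Type*}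
    [PseudoEMetricSpace α] {l : Filter ι} {S : ι → Set α} {T : Set α} {p : ι → α} {q : α}
    (hST : Tendsto (fun i => hausdorffEDist (S i) T) l (𝓝 0)) (hp : Tendsto p l (𝓝 q))
    (hpS : ∃ᶠ i in l, p i ∈ S i) : q ∈ closure T := by
  have hbound : Tendsto (fun i => edist q (p i) + hausdorffEDist (S i) T) l (𝓝 0) := by
    simpa using ((tendsto_const_nhds (x := q)).edist hp).add hST
  have hle : ∃ᶠ i in l, infEDist q T ≤ edist q (p i) + hausdorffEDist (S i) T :=
    hpS.mono fun i hi => infEDist_le_infEDist_add_hausdorffEDist.trans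
      (add_le_add_left (infEDist_le_edist_of_mem hi) _)
  exact mem_closure_iff_infEDist_zero.mpr <|
    nonpos_iff_eq_zero.mp (ge_of_tendsto_of_frequently hbound hle)

theorem tendsto_infDist_of_tendsto_hausdorffDist {α ι : Type*} [PseudoMetricSpace α]
    {l : Filter ι} {D : ι → Set α} {E : Set α} {x : α} (hx : x ∈ E) (hE : IsBounded E)
    (hD : ∀ i, (D i).Nonempty ∧ IsBounded (D i))
    (hDE : Tendsto (fun i => hausdorffDist (D i) E) l (𝓝 0)) :
    Tendsto (fun i => infDist x (D i)) l (𝓝 0) := by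
  refine squeeze_zero (fun _ => infDist_nonneg) (fun i => ?_) hDE
  rw [hausdorffDist_comm]
  exact infDist_le_hausdorffDist_of_mem hx
    (hausdorffEDist_ne_top_of_nonempty_of_bounded ⟨x, hx⟩ (hD i).1 hE (hD i).2)

theorem exists_tendsto_of_tendsto_infDist {α ι : Type*} [PseudoMetricSpace α]
    {l : Filter ι} {D : ι → Set α} {x : α} (hD : ∀ i, (D i).Nonempty ∧ IsCompact (D i))
    (hxD : Tendsto (fun i => infDist x (D i)) l (𝓝 0)) :
    ∃ y : ι → α, (∀ i, y i ∈ D i) ∧ Tendsto y l (𝓝 x) := by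
  choose y hyD hy using fun i => (hD i).2.exists_infDist_eq_dist (hD i).1 x
  refine ⟨y, hyD, tendsto_iff_dist_tendsto_zero.mpr ?_⟩
  simpa only [dist_comm, ← hy] using hxD

theorem exists_tendsto_of_tendsto_hausdorffDist_s18 {α ι : Type*} [PseudoMetricSpace α]
    {l : Filter ι} {D : ι → Set α} {E : Set α} {x : α} (hx : x ∈ E) (hE : IsBounded E)
    (hD : ∀ i, (D i).Nonempty ∧ IsCompact (D i))
    (hDE : Tendsto (fun i => hausdorffDist (D i) E) l (𝓝 0)) :
    ∃ y : ι → α, (∀ i, y i ∈ D i) ∧ Tendsto y l (𝓝 x) :=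
  exists_tendsto_of_tendsto_infDist hD <|
    tendsto_infDist_of_tendsto_hausdorffDist hx hE (fun i => ⟨(hD i).1, (hD i).2.isBounded⟩) hDE

theorem stmt_18_general {X : Type*} [MetricSpace X]
    (Rn : ℕ → X → X → Prop) (R : X → X → Prop)
    (hclosed : IsClosed {p : X × X | R p.1 p.2})
    (hRconv : Tendsto
      (fun n => EMetric.hausdorffEdist {p : X × X | Rn n p.1 p.2} {p : X × X | R p.1 p.2})
      atTop (nhds (0 : ℝ≥0∞)))
    (K D : ℕ → Set X) (Dl : Set X)
    (hD : ∀ n, D n ⊆ K n ∧ (D n).Nonempty ∧ IsCompact (D n))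
    (hDlc : IsCompact Dl)
    (hDconv : Tendsto (fun n => Metric.hausdorffDist (D n) Dl) atTop (nhds 0))
    (hcomp : ∀ n, ∀ x ∈ D n, ∀ y ∈ D n, Rn n x y ∨ Rn n y x) :
    ∀ x ∈ Dl, ∀ y ∈ Dl, R x y ∨ R y x := by
  intro x hx y hy
  have hD' : ∀ n, (D n).Nonempty ∧ IsCompact (D n) := fun n => (hD n).2
  obtain ⟨xn, hxn, hxlim⟩ := exists_tendsto_of_tendsto_hausdorffDist_s18 hx hDlc.isBounded hD' hDconv
  obtain ⟨yn, hyn, hylim⟩ := exists_tendsto_of_tendsto_hausdorffDist_s18 hy hDlc.isBounded hD' hDconv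
  have hlim {a b : ℕ → X} {u v : X} (ha : Tendsto a atTop (𝓝 u)) (hb : Tendsto b atTop (𝓝 v))
      (hab : ∃ᶠ n in atTop, Rn n (a n) (b n)) : R u v :=
    hclosed.closure_subset <|
      mem_closure_of_frequently_mem_of_tendsto_hausdorffEDist hRconv (ha.prodMk_nhds hb) hab
  rcases frequently_or_distrib.mp
      (Frequently.of_forall (f := atTop) fun n => hcomp n _ (hxn n) _ (hyn n)) with hxy | hyx
  · exact Or.inl (hlim hxlim hylim hxy)
  · exact Or.inr (hlim hylim hxlim hyx)

/-- If the closed graphs of reflexive transitive relations ≿ₙ converge in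
the Hausdorff distance to the closed graph of ≿, and ≿ₙ is complete on Dₙ with
nonempty compact Dₙ → D in the Hausdorff metric, then ≿ is complete on D. -/
theorem stmt_18 {X : Type*} [MetricSpace X]
    (Rn : ℕ → X → X → Prop) (R : X → X → Prop)
    (hrefln : ∀ n, Reflexive (Rn n)) (htransn : ∀ n, Transitive (Rn n))
    (hclosedn : ∀ n, IsClosed {p : X × X | Rn n p.1 p.2})
    (hclosed : IsClosed {p : X × X | R p.1 p.2})
    (hRconv : Tendsto
      (fun n => EMetric.hausdorffEdist {p : X × X | Rn n p.1 p.2} {p : X × X | R p.1 p.2})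
      atTop (nhds (0 : ℝ≥0∞)))
    (K D : ℕ → Set X) (Dl : Set X)
    (hD : ∀ n, D n ⊆ K n ∧ (D n).Nonempty ∧ IsCompact (D n))
    (hDl : Dl.Nonempty) (hDlc : IsCompact Dl)
    (hDconv : Tendsto (fun n => Metric.hausdorffDist (D n) Dl) atTop (nhds 0))
    (hcomp : ∀ n, ∀ x ∈ D n, ∀ y ∈ D n, Rn n x y ∨ Rn n y x) :
    ∀ x ∈ Dl, ∀ y ∈ Dl, R x y ∨ R y x :=
  stmt_18_general Rn R hclosed hRconv K D Dl hD hDlc hDconv hcomp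
end
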